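/- Let ψ(x) := Γ′(x)/Γ(x) be the digamma function and γ the Euler–Mascheroni constant. Then Σ_{n=1}^∞ ( 2ψ(4n) + ψ(n) + 3/(4n) − log(16 n³) ) < (log(32π³) − 3γ)/4, and Σ_{n=1}^∞ ( 2ψ(n) + ψ(n/4) + 3/n − log(n³/4) ) < log(π³/2) − 3γ. -/

import Mathlib

/-!
Every term of both series is nonpositive, while both right-hand sides are positive.
The terms are nonpositive because of the bound `ψ(x) ≤ log x - 1/(2x)` for `x > 0`
(for the first series apply it at `4n` and `n`, for the second at `n` and `n/4`).
To prove that bound, write `ψ(x) = ψ(x + k) - ∑_{j<k} 1/(x+j)`,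
bound `ψ(x + k) ≤ log (x + k)` by convexity of `log ∘ Γ`, bound the sum from below by
the trapezoidal rule for the convex function `1/t`, and let `k → ∞`.
-/

open Real Filter Set

noncomputable def digammaFn (x : ℝ) : ℝ := deriv Real.Gamma x / Real.Gamma x

section Digamma

variable {x : ℝ}

lemma differentiableAt_Gamma_of_pos (hx : 0 < x) : DifferentiableAt ℝ Gamma x :=
  differentiableAt_Gamma fun m => ((neg_nonpos.mpr m.cast_nonneg).trans_lt hx).ne'

lemma differentiableAt_log_Gamma_of_pos (hx : 0 < x) : DifferentiableAt ℝ (log ∘ Gamma) x :=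
  (differentiableAt_log (Gamma_pos_of_pos hx).ne').comp x (differentiableAt_Gamma_of_pos hx)

lemma digammaFn_eq_deriv_log_Gamma (hx : 0 < x) : digammaFn x = deriv (log ∘ Gamma) x :=
  (deriv.log (differentiableAt_Gamma_of_pos hx) (Gamma_pos_of_pos hx).ne').symm

lemma digammaFn_add_one (hx : 0 < x) : digammaFn (x + 1) = digammaFn x + 1 / x := by
  have hlog :
      (fun y => (log ∘ Gamma) (y + 1)) =ᶠ[nhds x] fun y => (log ∘ Gamma) y + log y := by
    filter_upwards [eventually_gt_nhds hx] with y hy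
    simp only [Function.comp_apply, Gamma_add_one hy.ne',
      log_mul hy.ne' (Gamma_pos_of_pos hy).ne', add_comm]
  rw [digammaFn_eq_deriv_log_Gamma hx, digammaFn_eq_deriv_log_Gamma (by linarith),
    ← deriv_comp_add_const, hlog.deriv_eq,
    deriv_fun_add (differentiableAt_log_Gamma_of_pos hx) (differentiableAt_log hx.ne'),
    deriv_log, one_div]

lemma digammaFn_add_nat (hx : 0 < x) (k : ℕ) :
    digammaFn (x + k) = digammaFn x + ∑ j ∈ Finset.range k, 1 / (x + j) := by
  induction k with
  | zero => simp
  | succ k ih =>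
    rw [Nat.cast_succ, ← add_assoc, digammaFn_add_one (by positivity), ih,
      Finset.sum_range_succ, add_assoc]

lemma digammaFn_le_log (hx : 0 < x) : digammaFn x ≤ log x := by
  have hslope := convexOn_log_Gamma.deriv_le_slope (mem_Ioi.mpr hx)
    (mem_Ioi.mpr (by linarith : 0 < x + 1)) (by linarith) (differentiableAt_log_Gamma_of_pos hx)
  rwa [slope_def_field, add_sub_cancel_left, div_one, Function.comp_apply, Function.comp_apply,
    Gamma_add_one hx.ne', log_mul hx.ne' (Gamma_pos_of_pos hx).ne', add_sub_cancel_right,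
    ← digammaFn_eq_deriv_log_Gamma hx] at hslope

end Digamma

lemma log_le_half_sub_inv {y : ℝ} (hy : 1 ≤ y) : log y ≤ (y - y⁻¹) / 2 := by
  have := self_le_sinh_iff.mpr (log_nonneg hy)
  rwa [sinh_log (by linarith)] at this

lemma log_add_one_sub_log_le {a : ℝ} (ha : 0 < a) :
    log (a + 1) - log a ≤ 1 / (2 * a) + 1 / (2 * (a + 1)) := by
  have h := log_le_half_sub_inv (y := (a + 1) / a) (by rw [le_div_iff₀ ha]; linarith)
  rw [log_div (by positivity) ha.ne', inv_div] at h
  convert h using 1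
  field_simp
  ring

lemma log_add_nat_sub_log_le_sum {x : ℝ} (hx : 0 < x) (k : ℕ) :
    log (x + k) - log x + 1 / (2 * x) - 1 / (2 * (x + k)) ≤
      ∑ j ∈ Finset.range k, 1 / (x + j) := by
  induction k with
  | zero => simp
  | succ k ih =>
    have hstep := log_add_one_sub_log_le (by positivity : 0 < x + k)
    rw [Nat.cast_succ, ← add_assoc, Finset.sum_range_succ]
    have hsplit : 1 / (x + k) = 2 * (1 / (2 * (x + k))) := by field_simp
    linarith

lemma digammaFn_le_log_sub_inv_two_mul {x : ℝ} (hx : 0 < x) :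
    digammaFn x ≤ log x - 1 / (2 * x) := by
  have hbound : ∀ k : ℕ, digammaFn x ≤ log x - 1 / (2 * x) + 1 / (2 * (x + k)) := fun k => by
    have hshift := digammaFn_add_nat hx k
    have hlog := digammaFn_le_log (by positivity : 0 < x + k)
    linarith [log_add_nat_sub_log_le_sum hx k]
  have htail : Tendsto (fun k : ℕ => 1 / (2 * (x + k))) atTop (nhds 0) := by
    have hden : Tendsto (fun k : ℕ => 2 * (x + k)) atTop atTop :=
      (tendsto_atTop_add_const_left _ x tendsto_natCast_atTop_atTop).const_mul_atTop two_pos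
    simpa only [one_div, Pi.inv_def] using hden.inv_tendsto_atTop
  exact ge_of_tendsto' (by simpa using htail.const_add (log x - 1 / (2 * x))) hbound

lemma two_mul_digammaFn_four_mul_add_digammaFn_le {x : ℝ} (hx : 0 < x) :
    2 * digammaFn (4 * x) + digammaFn x + 3 / (4 * x) ≤ log (16 * x ^ 3) := by
  have hlog : log (16 * x ^ 3) = 2 * log (4 * x) + log x := by
    rw [show 16 * x ^ 3 = (4 * x) ^ 2 * x by ring, log_mul (by positivity) hx.ne', log_pow]
    push_cast
    ring
  have hfour := digammaFn_le_log_sub_inv_two_mul (by positivity : 0 < 4 * x)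
  have hone := digammaFn_le_log_sub_inv_two_mul hx
  have hcancel : 3 / (4 * x) = 2 * (1 / (2 * (4 * x))) + 1 / (2 * x) := by field_simp; ring
  linarith

lemma two_mul_digammaFn_add_digammaFn_div_four_le {x : ℝ} (hx : 0 < x) :
    2 * digammaFn x + digammaFn (x / 4) + 3 / x ≤ log (x ^ 3 / 4) := by
  have hlog : log (x ^ 3 / 4) = 2 * log x + log (x / 4) := by
    rw [show x ^ 3 / 4 = x ^ 2 * (x / 4) by ring, log_mul (by positivity) (by positivity), log_pow]
    push_cast
    ring
  have hone := digammaFn_le_log_sub_inv_two_mul hx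
  have hquarter := digammaFn_le_log_sub_inv_two_mul (by positivity : 0 < x / 4)
  have hcancel : 3 / x = 2 * (1 / (2 * x)) + 1 / (2 * (x / 4)) := by field_simp; ring
  linarith

lemma three_mul_eulerMascheroniConstant_lt_log {y : ℝ} (hy : 8 ≤ y) :
    3 * eulerMascheroniConstant < log y := by
  have hexp : exp 2 < 8 := by
    rw [show (2 : ℝ) = 1 + 1 by norm_num, exp_add]
    nlinarith [exp_one_lt_d9, exp_pos 1]
  have htwo : 2 < log y := (lt_log_iff_exp_lt (by linarith)).mpr (by linarith)
  linarith [eulerMascheroniConstant_lt_two_thirds]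

theorem digamma_series_inequalities :
    (∑' n : ℕ+, (2 * digammaFn (4 * (n : ℝ)) + digammaFn (n : ℝ) + 3 / (4 * (n : ℝ)) -
        Real.log (16 * (n : ℝ) ^ 3)) <
      (Real.log (32 * π ^ 3) - 3 * Real.eulerMascheroniConstant) / 4) ∧
    (∑' n : ℕ+, (2 * digammaFn (n : ℝ) + digammaFn ((n : ℝ) / 4) + 3 / (n : ℝ) -
        Real.log ((n : ℝ) ^ 3 / 4)) <
      Real.log (π ^ 3 / 2) - 3 * Real.eulerMascheroniConstant) := by
  have hpi : 27 ≤ π ^ 3 :=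
    (by norm_num : (27 : ℝ) = 3 ^ 3).trans_le (pow_le_pow_left₀ (by norm_num) pi_gt_three.le 3)
  refine ⟨(tsum_nonpos fun n => sub_nonpos.mpr ?_).trans_lt ?_,
    (tsum_nonpos fun n => sub_nonpos.mpr ?_).trans_lt ?_⟩
  · exact two_mul_digammaFn_four_mul_add_digammaFn_le (Nat.cast_pos.mpr n.pos)
  · linarith [three_mul_eulerMascheroniConstant_lt_log (y := 32 * π ^ 3) (by linarith)]
  · exact two_mul_digammaFn_add_digammaFn_div_four_le (Nat.cast_pos.mpr n.pos)
  · linarith [three_mul_eulerMascheroniConstant_lt_log (y := π ^ 3 / 2) (by linarith)]
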